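/- arXiv:1905.09965 — 4 statements merged into one kernel-verified Lean document; each statement's English description precedes it below -/
import Mathlib

section
/- For r > 0 and 0 < ν < 1, ∑_{k≥0} ν^{2k}·(1/(k+r) − 1/(k+r+1)) = 2ν^{−2(r+1)} ∫_0^ν (s^{2r−1}/(1−s²))(ν²−s²) ds. -/
open MeasureTheory intervalIntegral Set

lemma aux_int (ν : ℝ) (hν0 : 0 < ν) {a : ℝ} (ha : -1 < a) :
    ∫ s in (0:ℝ)..ν, s ^ a * (ν ^ 2 - s ^ 2) = ν ^ (a + 3) * (1 / (a + 1) - 1 / (a + 3)) := by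
  have h2 : (2:ℝ) = ((2:ℕ):ℝ) := by norm_num
  have h1 : ∫ s in (0:ℝ)..ν, s ^ a * (ν ^ 2 - s ^ 2)
      = ∫ s in (0:ℝ)..ν, (ν ^ 2 * s ^ a - s ^ (a + 2)) := by
    apply intervalIntegral.integral_congr
    intro s hs
    rw [Set.uIcc_of_le hν0.le] at hs
    show s ^ a * (ν ^ 2 - s ^ 2) = ν ^ 2 * s ^ a - s ^ (a + 2)
    rcases eq_or_lt_of_le hs.1 with h | h
    · rw [← h]
      rw [Real.zero_rpow (by linarith : a + 2 ≠ 0)]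
      ring
    · have hs2 : s ^ (a + 2) = s ^ a * s ^ 2 := by
        rw [Real.rpow_add h a 2, h2, Real.rpow_natCast]
      rw [hs2]; ring
  have hi1 : IntervalIntegrable (fun s : ℝ => s ^ a) MeasureTheory.volume 0 ν :=
    intervalIntegral.intervalIntegrable_rpow' ha
  have hi2 : IntervalIntegrable (fun s : ℝ => s ^ (a + 2)) MeasureTheory.volume 0 ν :=
    intervalIntegral.intervalIntegrable_rpow' (by linarith)
  rw [h1, intervalIntegral.integral_sub (hi1.const_mul _) hi2,
    intervalIntegral.integral_const_mul, integral_rpow (Or.inl ha),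
    integral_rpow (Or.inl (by linarith : (-1:ℝ) < a + 2))]
  rw [Real.zero_rpow (by linarith : a + 1 ≠ 0), Real.zero_rpow (by linarith : a + 2 + 1 ≠ 0)]
  have hν3 : ν ^ 2 * ν ^ (a + 1) = ν ^ (a + 3) := by
    rw [show a + 3 = 2 + (a + 1) by ring, Real.rpow_add hν0 2 (a + 1), h2, Real.rpow_natCast]
  have h23 : a + 2 + 1 = a + 3 := by ring
  rw [sub_zero, sub_zero, h23, ← mul_div_assoc, hν3]
  ring

theorem lerch_diff_sum_integral (r ν : ℝ) (hr : 0 < r) (hν0 : 0 < ν) (hν1 : ν < 1) :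
    ∑' k : ℕ, ν ^ (2 * k) * (1 / ((k : ℝ) + r) - 1 / ((k : ℝ) + r + 1))
      = 2 * ν ^ (-(2 : ℝ) * (r + 1)) *
        ∫ s in (0 : ℝ)..ν, s ^ (2 * r - 1) / (1 - s ^ 2) * (ν ^ 2 - s ^ 2) := by
  have hν2 : ν ^ 2 < 1 := by nlinarith
  have hν2' : (0:ℝ) < ν ^ 2 := by positivity
  set g : ℕ → ℝ → ℝ := fun k s => s ^ (2 * (k:ℝ) + (2 * r - 1)) * (ν ^ 2 - s ^ 2) with hg
  have ha : ∀ k : ℕ, (-1:ℝ) < 2 * (k:ℝ) + (2 * r - 1) := by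
    intro k
    have : (0:ℝ) ≤ (k:ℝ) := Nat.cast_nonneg k
    linarith
  -- per-term integral values
  have hints : ∀ k : ℕ, ∫ s in (0:ℝ)..ν, g k s
      = (ν ^ ((2:ℝ) * r + 2) / 2) * (ν ^ (2 * k) * (1 / ((k:ℝ) + r) - 1 / ((k:ℝ) + r + 1))) := by
    intro k
    have h := aux_int ν hν0 (ha k)
    have hkr : (0:ℝ) < (k:ℝ) + r := by positivity
    have e1 : ν ^ (2 * (k:ℝ) + (2 * r - 1) + 3) = ν ^ (2 * k) * ν ^ ((2:ℝ) * r + 2) := by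
      rw [show 2 * (k:ℝ) + (2 * r - 1) + 3 = 2 * (k:ℝ) + ((2:ℝ) * r + 2) by ring,
        Real.rpow_add hν0, show (2 : ℝ) * (k:ℝ) = ((2 * k : ℕ) : ℝ) by push_cast; ring,
        Real.rpow_natCast]
    have e2 : 1 / (2 * (k:ℝ) + (2 * r - 1) + 1) - 1 / (2 * (k:ℝ) + (2 * r - 1) + 3)
        = (1 / 2) * (1 / ((k:ℝ) + r) - 1 / ((k:ℝ) + r + 1)) := by
      rw [show 2 * (k:ℝ) + (2 * r - 1) + 1 = 2 * ((k:ℝ) + r) by ring,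
        show 2 * (k:ℝ) + (2 * r - 1) + 3 = 2 * ((k:ℝ) + r + 1) by ring]
      field_simp
    rw [hg, h, e1, e2]
    ring
  -- summability of the target sum
  have hnn : ∀ k : ℕ, 0 ≤ ν ^ (2 * k) * (1 / ((k:ℝ) + r) - 1 / ((k:ℝ) + r + 1)) := by
    intro k
    have hkr : (0:ℝ) < (k:ℝ) + r := by positivity
    have : 1 / ((k:ℝ) + r + 1) ≤ 1 / ((k:ℝ) + r) :=
      one_div_le_one_div_of_le hkr (by linarith)
    have h0 : (0:ℝ) ≤ ν ^ (2 * k) := by positivity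
    nlinarith
  have hsum : Summable (fun k : ℕ => ν ^ (2 * k) * (1 / ((k:ℝ) + r) - 1 / ((k:ℝ) + r + 1))) := by
    apply Summable.of_nonneg_of_le hnn _
      ((summable_geometric_of_lt_one hν2'.le hν2).mul_right (1 / r))
    intro k
    have hkr : (0:ℝ) < (k:ℝ) + r := by positivity
    have h1 : 1 / ((k:ℝ) + r) - 1 / ((k:ℝ) + r + 1) ≤ 1 / r := by
      have : 1 / ((k:ℝ) + r) ≤ 1 / r := by
        apply one_div_le_one_div_of_le hr
        have : (0:ℝ) ≤ (k:ℝ) := Nat.cast_nonneg k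
        linarith
      have h2 : 0 < 1 / ((k:ℝ) + r + 1) := by positivity
      linarith
    calc ν ^ (2 * k) * (1 / ((k:ℝ) + r) - 1 / ((k:ℝ) + r + 1))
        ≤ ν ^ (2 * k) * (1 / r) := by
          apply mul_le_mul_of_nonneg_left h1 (by positivity)
      _ = (ν ^ 2) ^ k * (1 / r) := by rw [← pow_mul]
  -- integrability of each g k on [0, ν]
  have hInt : ∀ k : ℕ, IntervalIntegrable (g k) MeasureTheory.volume 0 ν := by
    intro k
    exact (intervalIntegral.intervalIntegrable_rpow' (ha k)).mul_continuousOn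
      (Continuous.continuousOn (by continuity))
  have hIoc : ∀ k : ℕ, IntegrableOn (g k) (Ioc 0 ν) MeasureTheory.volume := by
    intro k
    exact (intervalIntegrable_iff_integrableOn_Ioc_of_le hν0.le).mp (hInt k)
  -- nonnegativity of g k on Ioc
  have hgnn : ∀ k : ℕ, ∀ s ∈ Ioc (0:ℝ) ν, 0 ≤ g k s := by
    intro k s hs
    apply mul_nonneg (Real.rpow_nonneg hs.1.le _)
    nlinarith [hs.1, hs.2]
  -- norm integrals equal plain integrals
  have hnormint : ∀ k : ℕ, (∫ s in Ioc (0:ℝ) ν, ‖g k s‖) = ∫ s in (0:ℝ)..ν, g k s := by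
    intro k
    rw [intervalIntegral.integral_of_le hν0.le]
    apply setIntegral_congr_fun measurableSet_Ioc
    intro s hs
    exact Real.norm_of_nonneg (hgnn k s hs)
  -- interchange sum and integral
  have hswap : ∑' k : ℕ, (∫ s in Ioc (0:ℝ) ν, g k s)
      = ∫ s in Ioc (0:ℝ) ν, ∑' k : ℕ, g k s := by
    apply integral_tsum_of_summable_integral_norm (fun k => hIoc k)
    simp_rw [hnormint, hints]
    exact (hsum.mul_left _)
  -- pointwise value of the tsum on Ioc
  have hpt : ∀ s ∈ Ioc (0:ℝ) ν, (∑' k : ℕ, g k s)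
      = s ^ (2 * r - 1) / (1 - s ^ 2) * (ν ^ 2 - s ^ 2) := by
    intro s hs
    have hs0 : 0 < s := hs.1
    have hs1 : s ^ 2 < 1 := by nlinarith [hs.2]
    have hgk : ∀ k : ℕ, g k s = (s ^ 2) ^ k * (s ^ (2 * r - 1) * (ν ^ 2 - s ^ 2)) := by
      intro k
      show s ^ (2 * (k:ℝ) + (2 * r - 1)) * (ν ^ 2 - s ^ 2)
          = (s ^ 2) ^ k * (s ^ (2 * r - 1) * (ν ^ 2 - s ^ 2))
      have : s ^ (2 * (k:ℝ) + (2 * r - 1)) = (s ^ 2) ^ k * s ^ (2 * r - 1) := by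
        rw [Real.rpow_add hs0, show (2 : ℝ) * (k:ℝ) = ((2 * k : ℕ) : ℝ) by push_cast; ring,
          Real.rpow_natCast, pow_mul]
      rw [this]; ring
    simp_rw [hgk]
    rw [tsum_mul_right, tsum_geometric_of_lt_one (by positivity) hs1]
    field_simp
  -- put everything together
  have hRHS : ∫ s in (0:ℝ)..ν, s ^ (2 * r - 1) / (1 - s ^ 2) * (ν ^ 2 - s ^ 2)
      = (ν ^ ((2:ℝ) * r + 2) / 2) *
        ∑' k : ℕ, ν ^ (2 * k) * (1 / ((k:ℝ) + r) - 1 / ((k:ℝ) + r + 1)) := by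
    rw [intervalIntegral.integral_of_le hν0.le,
      ← setIntegral_congr_fun measurableSet_Ioc hpt, ← hswap]
    rw [tsum_congr (fun k => by rw [← intervalIntegral.integral_of_le hν0.le, hints k])]
    rw [tsum_mul_left]
  rw [hRHS]
  have hone : ν ^ (-(2:ℝ) * (r + 1)) * ν ^ ((2:ℝ) * r + 2) = 1 := by
    rw [← Real.rpow_add hν0, show -(2:ℝ) * (r + 1) + ((2:ℝ) * r + 2) = 0 by ring,
      Real.rpow_zero]
  linear_combination (-(∑' k : ℕ, ν ^ (2 * k) * (1 / ((k:ℝ) + r) - 1 / ((k:ℝ) + r + 1)))) * hone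
end

section
/- For r > 0 and 0 < ν < 1, the function V(u) = ((u+r+1)/(u+1))·∑_{k≥0} ν^{2k}(1/(k+r) − 1/(k+u+1+r)) is increasing in u on [0,∞), with derivative V'(u) = ∑_{k≥0} ν^{2k}·k/((k+u+1+r)²(k+r)) > 0, and sup_{u≥0} V(u) = ∑_{k≥0} ν^{2k}/(k+r). -/
open Filter Topology

theorem V_increasing_sup (r ν : ℝ) (hr : 0 < r) (hν0 : 0 < ν) (hν1 : ν < 1)
    (V : ℝ → ℝ)
    (hV : ∀ u : ℝ, V u = ((u + r + 1) / (u + 1)) *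
      ∑' k : ℕ, ν ^ (2 * k) * (1 / ((k : ℝ) + r) - 1 / ((k : ℝ) + u + 1 + r))) :
    StrictMonoOn V (Set.Ici (0 : ℝ)) ∧
    (∀ u : ℝ, 0 ≤ u → HasDerivAt V
      (∑' k : ℕ, ν ^ (2 * k) * k / (((k : ℝ) + u + 1 + r) ^ 2 * ((k : ℝ) + r))) u) ∧
    IsLUB (V '' Set.Ici (0 : ℝ)) (∑' k : ℕ, ν ^ (2 * k) / ((k : ℝ) + r)) := by
  have hν2 : ‖ν ^ 2‖ < 1 := by
    rw [Real.norm_eq_abs, abs_of_pos (by positivity)]; nlinarith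
  -- basic summability
  have hgeo : Summable (fun k : ℕ => (k : ℝ) * ν ^ (2 * k)) := by
    have := summable_pow_mul_geometric_of_norm_lt_one 1 hν2
    simpa [pow_mul, pow_one] using this
  have hgeo0 : Summable (fun k : ℕ => ν ^ (2 * k)) := by
    simpa [pow_mul] using summable_geometric_of_norm_lt_one hν2
  have hkpos : ∀ k : ℕ, (0 : ℝ) < (k : ℝ) + r := fun k => by positivity
  have hkupos : ∀ (k : ℕ) (u : ℝ), -1/2 < u → (0 : ℝ) < (k : ℝ) + u + 1 + r := by
    intro k u hu
    have : (0:ℝ) ≤ (k:ℝ) := Nat.cast_nonneg k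
    linarith
  have hkuge : ∀ (k : ℕ) (u : ℝ), -1/2 < u → (1/2 : ℝ) + r ≤ (k : ℝ) + u + 1 + r := by
    intro k u hu
    have : (0:ℝ) ≤ (k:ℝ) := Nat.cast_nonneg k
    linarith
  have hnupos : ∀ k : ℕ, (0:ℝ) ≤ ν ^ (2*k) * k := fun k => by positivity
  -- the series g u k
  set g : ℝ → ℕ → ℝ := fun u k => ν ^ (2*k) * k / (((k:ℝ) + r) * ((k:ℝ) + u + 1 + r)) with hgdef
  set W : ℝ → ℝ := fun u => ∑' k : ℕ, g u k with hWdef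
  set S : ℝ := ∑' k : ℕ, ν ^ (2*k) / ((k:ℝ) + r) with hSdef
  have hsuma : Summable (fun k : ℕ => ν ^ (2*k) / ((k:ℝ) + r)) := by
    apply Summable.of_nonneg_of_le (fun k => by positivity)
      (f := fun k : ℕ => ν ^ (2*k) / r) (fun k => ?_) (hgeo0.div_const _)
    exact div_le_div_of_nonneg_left (by positivity) hr (le_add_of_nonneg_left (Nat.cast_nonneg k))
  have hsumg : ∀ u : ℝ, -1/2 < u → Summable (g u) := by
    intro u hu
    apply Summable.of_nonneg_of_le
      (fun k => by
        have := hkupos k u hu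
        have := hkpos k
        positivity)
      (f := fun k : ℕ => ((k:ℝ) * ν ^ (2*k)) * (r * (1/2 + r))⁻¹)
      (fun k => ?_) (hgeo.mul_right _)
    have h2 := hkuge k u hu
    have h3 : (0:ℝ) ≤ (k:ℝ) := Nat.cast_nonneg k
    have h1 : r * (1/2 + r) ≤ ((k:ℝ) + r) * ((k:ℝ) + u + 1 + r) :=
      mul_le_mul (le_add_of_nonneg_left h3) h2 (by positivity) (hkpos k).le
    calc ν ^ (2*k) * k / (((k:ℝ) + r) * ((k:ℝ) + u + 1 + r))
        ≤ ν ^ (2*k) * k / (r * (1/2 + r)) :=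
          div_le_div_of_nonneg_left (hnupos k) (by positivity) h1
      _ = ((k:ℝ) * ν ^ (2*k)) * (r * (1/2 + r))⁻¹ := by ring
  -- V u = S - W u for u > -1/2
  have hVS : ∀ u : ℝ, -1/2 < u → V u = S - W u := by
    intro u hu
    rw [hV u, ← tsum_mul_left]
    have : ∀ k : ℕ, (u + r + 1) / (u + 1) * (ν ^ (2*k) * (1 / ((k:ℝ) + r) - 1 / ((k:ℝ) + u + 1 + r)))
        = ν ^ (2*k) / ((k:ℝ) + r) - g u k := by
      intro k
      have h1 := (hkpos k).ne'
      have h2 := (hkupos k u hu).ne'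
      have h3 : u + 1 ≠ 0 := by linarith
      simp only [hgdef]
      field_simp
      ring
    rw [tsum_congr this, hsuma.tsum_sub (hsumg u hu)]
  -- derivative of W
  have hderivW : ∀ u : ℝ, -1/2 < u → HasDerivAt W
      (∑' k : ℕ, -(ν ^ (2*k) * k / (((k:ℝ) + r) * ((k:ℝ) + u + 1 + r) ^ 2))) u := by
    intro u hu
    apply hasDerivAt_tsum_of_isPreconnected
      (u := fun k : ℕ => ((k:ℝ) * ν ^ (2*k)) * (r * (1/2 + r)^2)⁻¹)
      (g := fun k y => g y k)
      (g' := fun k y => -(ν ^ (2*k) * k / (((k:ℝ) + r) * ((k:ℝ) + y + 1 + r) ^ 2)))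
      (hgeo.mul_right _) isOpen_Ioi (isPreconnected_Ioi) ?_ ?_
      (Set.mem_Ioi.2 (by norm_num : (-1/2:ℝ) < 0)) (hsumg 0 (by norm_num)) (Set.mem_Ioi.2 hu)
    · intro k y hy
      have hy' : -1/2 < y := hy
      have h1 := (hkpos k).ne'
      have h2 := (hkupos k y hy').ne'
      have hd1 : HasDerivAt (fun z : ℝ => (k:ℝ) + z + 1 + r) 1 y := by
        simpa using (((hasDerivAt_id y).const_add ((k:ℝ))).add_const 1).add_const r
      have hd : HasDerivAt (fun z : ℝ => ((k:ℝ) + r) * ((k:ℝ) + z + 1 + r)) ((k:ℝ) + r) y := by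
        simpa using hd1.const_mul ((k:ℝ) + r)
      have hdne : ((k:ℝ) + r) * ((k:ℝ) + y + 1 + r) ≠ 0 := by
        exact (mul_pos (hkpos k) (hkupos k y hy')).ne'
      have := (hasDerivAt_const y (ν ^ (2*k) * (k:ℝ))).div hd hdne
      convert this using 1
      · rfl
      · rfl
      field_simp
      ring
    · intro k y hy
      have hy' : -1/2 < y := hy
      rw [Real.norm_eq_abs, abs_neg, abs_of_nonneg (by
        have := hkupos k y hy'
        have := hkpos k
        positivity)]
      have h2 := hkuge k y hy'
      have h3 : (0:ℝ) ≤ (k:ℝ) := Nat.cast_nonneg k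
      have hsq : (1/2 + r)^2 ≤ ((k:ℝ) + y + 1 + r)^2 := pow_le_pow_left₀ (by positivity) h2 2
      have h1 : r * (1/2 + r)^2 ≤ ((k:ℝ) + r) * ((k:ℝ) + y + 1 + r) ^ 2 :=
        mul_le_mul (le_add_of_nonneg_left h3) hsq (by positivity) (hkpos k).le
      calc ν ^ (2*k) * k / (((k:ℝ) + r) * ((k:ℝ) + y + 1 + r) ^ 2)
          ≤ ν ^ (2*k) * k / (r * (1/2 + r)^2) :=
            div_le_div_of_nonneg_left (hnupos k) (by positivity) h1
        _ = ((k:ℝ) * ν ^ (2*k)) * (r * (1/2 + r)^2)⁻¹ := by ring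
  -- derivative of V
  have hDsum : ∀ u : ℝ, -1/2 < u →
      Summable (fun k : ℕ => ν ^ (2*k) * k / (((k:ℝ) + r) * ((k:ℝ) + u + 1 + r) ^ 2)) := by
    intro u hu
    apply Summable.of_nonneg_of_le
      (fun k => by
        have := hkupos k u hu
        have := hkpos k
        positivity)
      (f := fun k : ℕ => ((k:ℝ) * ν ^ (2*k)) * (r * (1/2 + r)^2)⁻¹)
      (fun k => ?_) (hgeo.mul_right _)
    have h2 := hkuge k u hu
    have h3 : (0:ℝ) ≤ (k:ℝ) := Nat.cast_nonneg k
    have hsq : (1/2 + r)^2 ≤ ((k:ℝ) + u + 1 + r)^2 := pow_le_pow_left₀ (by positivity) h2 2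
    have h1 : r * (1/2 + r)^2 ≤ ((k:ℝ) + r) * ((k:ℝ) + u + 1 + r) ^ 2 :=
      mul_le_mul (le_add_of_nonneg_left h3) hsq (by positivity) (hkpos k).le
    calc ν ^ (2*k) * k / (((k:ℝ) + r) * ((k:ℝ) + u + 1 + r) ^ 2)
        ≤ ν ^ (2*k) * k / (r * (1/2 + r)^2) :=
          div_le_div_of_nonneg_left (hnupos k) (by positivity) h1
      _ = ((k:ℝ) * ν ^ (2*k)) * (r * (1/2 + r)^2)⁻¹ := by ring
  have hderivV : ∀ u : ℝ, -1/2 < u → HasDerivAt V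
      (∑' k : ℕ, ν ^ (2*k) * k / (((k:ℝ) + u + 1 + r) ^ 2 * ((k:ℝ) + r))) u := by
    intro u hu
    have h1 : HasDerivAt (fun y => S - W y)
        (-(∑' k : ℕ, -(ν ^ (2*k) * k / (((k:ℝ) + r) * ((k:ℝ) + u + 1 + r) ^ 2)))) u :=
      (hderivW u hu).const_sub S
    have heq : V =ᶠ[𝓝 u] fun y => S - W y :=
      Filter.eventuallyEq_of_mem (isOpen_Ioi.mem_nhds (Set.mem_Ioi.2 hu))
        (fun y hy => hVS y hy)
    have h2 := h1.congr_of_eventuallyEq heq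
    have h3 : (-(∑' k : ℕ, -(ν ^ (2*k) * k / (((k:ℝ) + r) * ((k:ℝ) + u + 1 + r) ^ 2))))
        = ∑' k : ℕ, ν ^ (2*k) * k / (((k:ℝ) + u + 1 + r) ^ 2 * ((k:ℝ) + r)) := by
      rw [tsum_neg, neg_neg]
      exact tsum_congr fun k => by ring
    rwa [h3] at h2
  have hpart2 : ∀ u : ℝ, 0 ≤ u → HasDerivAt V
      (∑' k : ℕ, ν ^ (2 * k) * k / (((k : ℝ) + u + 1 + r) ^ 2 * ((k : ℝ) + r))) u :=
    fun u hu => hderivV u (by linarith)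
  have hDpos : ∀ u : ℝ, 0 ≤ u →
      0 < ∑' k : ℕ, ν ^ (2*k) * k / (((k:ℝ) + u + 1 + r) ^ 2 * ((k:ℝ) + r)) := by
    intro u hu
    have hu' : (-1/2 : ℝ) < u := by linarith
    have hsum : Summable (fun k : ℕ => ν ^ (2*k) * k / (((k:ℝ) + u + 1 + r) ^ 2 * ((k:ℝ) + r))) := by
      have := hDsum u hu'
      refine this.congr fun k => by ring
    refine hsum.tsum_pos (fun k => ?_) 1 ?_
    · have := hkupos k u hu'
      have := hkpos k
      positivity
    · have h1 := hkupos 1 u hu'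
      have h2 := hkpos 1
      push_cast at h1 h2 ⊢
      positivity
  refine ⟨?_, hpart2, ?_⟩
  · -- strict mono
    apply strictMonoOn_of_deriv_pos (convex_Ici 0)
    · intro x hx
      exact ((hpart2 x hx).continuousAt).continuousWithinAt
    · intro x hx
      rw [interior_Ici] at hx
      have hx' : (0:ℝ) ≤ x := le_of_lt hx
      rw [(hpart2 x hx').deriv]
      exact hDpos x hx'
  · constructor
    · rintro y ⟨u, hu, rfl⟩
      have hu' : (-1/2:ℝ) < u := by have := Set.mem_Ici.1 hu; linarith
      rw [hVS u hu']
      have hW : 0 ≤ W u := tsum_nonneg fun k => by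
        have := hkupos k u hu'
        have := hkpos k
        positivity
      linarith
    · intro b hb
      set C : ℝ := ∑' k : ℕ, ν ^ (2*k) * k / ((k:ℝ) + r) with hCdef
      have hsumC : Summable (fun k : ℕ => ν ^ (2*k) * k / ((k:ℝ) + r)) := by
        apply Summable.of_nonneg_of_le (fun k => by have := hkpos k; positivity)
          (f := fun k : ℕ => ((k:ℝ) * ν ^ (2*k)) * r⁻¹) (fun k => ?_) (hgeo.mul_right _)
        calc ν ^ (2*k) * k / ((k:ℝ) + r) ≤ ν ^ (2*k) * k / r :=
              div_le_div_of_nonneg_left (hnupos k) hr (le_add_of_nonneg_left (Nat.cast_nonneg k))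
          _ = ((k:ℝ) * ν ^ (2*k)) * r⁻¹ := by ring
      -- W u ≤ C / (u + 1) for u ≥ 0
      have hWle : ∀ u : ℝ, 0 ≤ u → W u ≤ C / (u + 1) := by
        intro u hu
        have hu' : (-1/2:ℝ) < u := by linarith
        have hsum2 : Summable (fun k : ℕ => ν ^ (2*k) * k / ((k:ℝ) + r) / (u + 1)) :=
          hsumC.div_const _
        calc W u ≤ ∑' k : ℕ, ν ^ (2*k) * k / ((k:ℝ) + r) / (u + 1) := by
              apply Summable.tsum_le_tsum _ (hsumg u hu') hsum2
              intro k
              have h1 : u + 1 ≤ (k:ℝ) + u + 1 + r := by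
                have : (0:ℝ) ≤ (k:ℝ) := Nat.cast_nonneg k
                linarith
              have h2 : (0:ℝ) < u + 1 := by linarith
              calc ν ^ (2*k) * k / (((k:ℝ) + r) * ((k:ℝ) + u + 1 + r))
                  ≤ ν ^ (2*k) * k / (((k:ℝ) + r) * (u + 1)) :=
                    div_le_div_of_nonneg_left (hnupos k) (mul_pos (hkpos k) h2)
                      (mul_le_mul_of_nonneg_left h1 (hkpos k).le)
                _ = ν ^ (2*k) * k / ((k:ℝ) + r) / (u + 1) := by
                    rw [div_div]
          _ = C / (u + 1) := by rw [tsum_div_const]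
      have hCnn : 0 ≤ C := tsum_nonneg fun k => by have := hkpos k; positivity
      -- V n → S along naturals
      have hlim : Tendsto (fun n : ℕ => V n) atTop (𝓝 S) := by
        have h0 : Tendsto (fun n : ℕ => C / ((n:ℝ) + 1)) atTop (𝓝 0) := by
          apply Tendsto.div_atTop (tendsto_const_nhds)
          exact tendsto_atTop_add_const_right _ 1 tendsto_natCast_atTop_atTop
        have hlo : Tendsto (fun n : ℕ => S - C / ((n:ℝ) + 1)) atTop (𝓝 S) := by
          simpa using (tendsto_const_nhds (x := S)).sub h0
        apply tendsto_of_tendsto_of_tendsto_of_le_of_le hlo (tendsto_const_nhds (x := S))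
        · intro n
          have hn : (0:ℝ) ≤ (n:ℝ) := Nat.cast_nonneg n
          show S - C / ((n:ℝ) + 1) ≤ V (n:ℝ)
          rw [hVS (n:ℝ) (by linarith)]
          have := hWle (n:ℝ) hn
          linarith
        · intro n
          have hn : (0:ℝ) ≤ (n:ℝ) := Nat.cast_nonneg n
          show V (n:ℝ) ≤ S
          rw [hVS (n:ℝ) (by linarith)]
          have hW : 0 ≤ W (n:ℝ) := tsum_nonneg fun k => by
            have := hkupos k (n:ℝ) (by linarith)
            have := hkpos k
            positivity
          linarith
      exact le_of_tendsto hlim (Filter.Eventually.of_forall fun n =>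
        hb (Set.mem_image_of_mem V (Set.mem_Ici.2 (Nat.cast_nonneg n))))
end

section
/- If r ≥ 2ν²/(1−ν²) with 0 < ν < 1 and r > 0, then (2ν² + r(1−ν²))·∑_{k≥0} ν^{2k}/(k+r) ≤ 2. -/
theorem gap_condition (r ν : ℝ) (hr : 0 < r) (hν0 : 0 < ν) (hν1 : ν < 1)
    (hrν : r ≥ 2 * ν ^ 2 / (1 - ν ^ 2)) :
    (2 * ν ^ 2 + r * (1 - ν ^ 2)) * ∑' k : ℕ, ν ^ (2 * k) / ((k : ℝ) + r) ≤ 2 := by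
  have hx0 : 0 < ν ^ 2 := by positivity
  have hx1 : ν ^ 2 < 1 := by nlinarith
  have h1x : 0 < 1 - ν ^ 2 := by linarith
  -- summability
  have hgeo : Summable (fun k : ℕ => (ν ^ 2) ^ k / r) := by
    exact (summable_geometric_of_lt_one (le_of_lt hx0) hx1).div_const r
  have hle : ∀ k : ℕ, ν ^ (2 * k) / ((k : ℝ) + r) ≤ (ν ^ 2) ^ k / r := by
    intro k
    rw [pow_mul]
    apply div_le_div_of_nonneg_left (by positivity) hr
    have : (0 : ℝ) ≤ (k : ℝ) := Nat.cast_nonneg k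
    linarith
  have hnn : ∀ k : ℕ, 0 ≤ ν ^ (2 * k) / ((k : ℝ) + r) := by
    intro k
    have : (0 : ℝ) ≤ (k : ℝ) := Nat.cast_nonneg k
    positivity
  have hsum : Summable (fun k : ℕ => ν ^ (2 * k) / ((k : ℝ) + r)) :=
    Summable.of_nonneg_of_le hnn hle hgeo
  have hts : ∑' k : ℕ, ν ^ (2 * k) / ((k : ℝ) + r) ≤ ∑' k : ℕ, (ν ^ 2) ^ k / r :=
    Summable.tsum_le_tsum hle hsum hgeo
  have hval : ∑' k : ℕ, (ν ^ 2) ^ k / r = (1 - ν ^ 2)⁻¹ / r := by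
    rw [tsum_div_const, tsum_geometric_of_lt_one (le_of_lt hx0) hx1]
  rw [hval] at hts
  have hrcond : 2 * ν ^ 2 ≤ r * (1 - ν ^ 2) := by
    rw [ge_iff_le, div_le_iff₀ h1x] at hrν
    linarith
  have hSnn : 0 ≤ ∑' k : ℕ, ν ^ (2 * k) / ((k : ℝ) + r) := tsum_nonneg hnn
  have hkey : (1 - ν ^ 2)⁻¹ / r = 1 / ((1 - ν ^ 2) * r) := by
    field_simp
  rw [hkey] at hts
  have hpos : 0 < (1 - ν ^ 2) * r := by positivity
  have hcoef : 0 < 2 * ν ^ 2 + r * (1 - ν ^ 2) := by nlinarith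
  calc (2 * ν ^ 2 + r * (1 - ν ^ 2)) * ∑' k : ℕ, ν ^ (2 * k) / ((k : ℝ) + r)
      ≤ (2 * ν ^ 2 + r * (1 - ν ^ 2)) * (1 / ((1 - ν ^ 2) * r)) := by
        exact mul_le_mul_of_nonneg_left hts (le_of_lt hcoef)
    _ ≤ 2 := by
        rw [mul_one_div, div_le_iff₀ hpos]
        nlinarith
end

section
/- For 0 < ν < 1 fixed, the quotient Q(r) := [∑_{j≥0} ((j+1)/((j+r+1)²(j+r)))ν^{2j}] / [∑_{j≥0} (1/(j+r) − (1−ν²)∑_{i≥0} ν^{2i}/(i+r))² ν^{2j}] tends to 0 as r → 0⁺. In particular, r²·(denominator) → ν² and r²·(numerator) → 0 as r → 0⁺. -/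
open Filter Set Topology

theorem gap_vanishes_as_r_to_zero (ν : ℝ) (hν0 : 0 < ν) (hν1 : ν < 1)
    (c : ℝ → ℝ) (hc : ∀ r : ℝ, c r = (1 - ν ^ 2) * ∑' i : ℕ, ν ^ (2 * i) / ((i : ℝ) + r))
    (N : ℝ → ℝ) (hN : ∀ r : ℝ, N r = ∑' j : ℕ,
      ((j : ℝ) + 1) / (((j : ℝ) + r + 1) ^ 2 * ((j : ℝ) + r)) * ν ^ (2 * j))
    (D : ℝ → ℝ) (hD : ∀ r : ℝ, D r = ∑' j : ℕ,
      (1 / ((j : ℝ) + r) - c r) ^ 2 * ν ^ (2 * j)) :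
    Filter.Tendsto (fun r : ℝ => r ^ 2 * D r) (nhdsWithin 0 (Set.Ioi 0)) (nhds (ν ^ 2)) ∧
    Filter.Tendsto (fun r : ℝ => r ^ 2 * N r) (nhdsWithin 0 (Set.Ioi 0)) (nhds 0) ∧
    Filter.Tendsto (fun r : ℝ => N r / D r) (nhdsWithin 0 (Set.Ioi 0)) (nhds 0) := by
  have hq0 : (0:ℝ) ≤ ν ^ 2 := by positivity
  have hq1 : ν ^ 2 < 1 := by nlinarith
  have hne : (1:ℝ) - ν ^ 2 ≠ 0 := by nlinarith
  have hsum : Summable (fun j : ℕ => ν ^ (2 * j)) := by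
    simpa [pow_mul] using summable_geometric_of_lt_one hq0 hq1
  have htsum : ∑' j : ℕ, ν ^ (2 * j) = (1 - ν ^ 2)⁻¹ := by
    simp only [pow_mul]
    exact tsum_geometric_of_lt_one hq0 hq1
  -- basic facts about r/(j+r) for r > 0
  have hjr : ∀ (j : ℕ) (r : ℝ), 0 < r → (0:ℝ) < (j:ℝ) + r := fun j r hr => by positivity
  have hfrac01 : ∀ (j : ℕ) (r : ℝ), 0 < r → 0 ≤ r / ((j:ℝ) + r) ∧ r / ((j:ℝ) + r) ≤ 1 := by
    intro j r hr
    constructor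
    · positivity
    · rw [div_le_one (hjr j r hr)]
      have : (0:ℝ) ≤ (j:ℝ) := j.cast_nonneg
      linarith
  -- pointwise limit of r/(j+r)
  have hrj : ∀ j : ℕ, Tendsto (fun r : ℝ => r / ((j:ℝ) + r)) (nhdsWithin 0 (Set.Ioi 0))
      (nhds (if j = 0 then 1 else 0)) := by
    intro j
    cases j with
    | zero =>
      simp only [Nat.cast_zero, if_pos rfl, zero_add]
      apply Tendsto.congr' _ tendsto_const_nhds
      filter_upwards [self_mem_nhdsWithin] with r hr
      exact (div_self (ne_of_gt hr)).symm
    | succ n =>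
      simp only [Nat.succ_ne_zero, if_neg]
      have h1 : Tendsto (fun r : ℝ => r) (nhdsWithin 0 (Set.Ioi 0)) (nhds 0) :=
        tendsto_id.mono_left nhdsWithin_le_nhds
      have h2 : Tendsto (fun r : ℝ => ((n:ℕ).succ : ℝ) + r) (nhdsWithin 0 (Set.Ioi 0))
          (nhds (((n:ℕ).succ : ℝ) + 0)) :=
        (tendsto_const_nhds.add tendsto_id).mono_left nhdsWithin_le_nhds
      have h3 : (((n:ℕ).succ : ℝ) + 0) ≠ 0 := by positivity
      simpa [Pi.div_def] using h1.div h2 h3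
  -- limit of r * c r
  have hrc_eq : ∀ r : ℝ, r * c r = (1 - ν ^ 2) * ∑' i : ℕ, ν ^ (2 * i) * (r / ((i:ℝ) + r)) := by
    intro r
    rw [hc r]
    rw [show r * ((1 - ν ^ 2) * ∑' i : ℕ, ν ^ (2 * i) / ((i : ℝ) + r))
        = (1 - ν ^ 2) * (r * ∑' i : ℕ, ν ^ (2 * i) / ((i : ℝ) + r)) by ring,
      ← tsum_mul_left]
    congr 1
    exact tsum_congr fun i => by rw [div_eq_mul_inv, div_eq_mul_inv]; ring
  have hbound_c : ∀ r : ℝ, 0 < r → ∀ i : ℕ,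
      ‖ν ^ (2 * i) * (r / ((i:ℝ) + r))‖ ≤ ν ^ (2 * i) := by
    intro r hr i
    have h01 := hfrac01 i r hr
    have hp : (0:ℝ) ≤ ν ^ (2 * i) := by positivity
    rw [Real.norm_eq_abs, abs_of_nonneg (by positivity)]
    calc ν ^ (2 * i) * (r / ((i:ℝ) + r)) ≤ ν ^ (2 * i) * 1 :=
          mul_le_mul_of_nonneg_left h01.2 hp
      _ = ν ^ (2 * i) := mul_one _
  have hsum_inner : Tendsto (fun r : ℝ => ∑' i : ℕ, ν ^ (2 * i) * (r / ((i:ℝ) + r)))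
      (nhdsWithin 0 (Set.Ioi 0))
      (nhds (∑' i : ℕ, ν ^ (2 * i) * (if i = 0 then 1 else 0))) := by
    apply tendsto_tsum_of_dominated_convergence hsum
    · exact fun i => tendsto_const_nhds.mul (hrj i)
    · filter_upwards [self_mem_nhdsWithin] with r hr
      exact hbound_c r hr
  have hinner_val : (∑' i : ℕ, ν ^ (2 * i) * (if i = 0 then 1 else 0)) = 1 := by
    rw [tsum_eq_single 0 (fun b hb => by simp [hb])]
    simp
  have hrc : Tendsto (fun r : ℝ => r * c r) (nhdsWithin 0 (Set.Ioi 0)) (nhds (1 - ν ^ 2)) := by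
    have := hsum_inner.const_mul (1 - ν ^ 2)
    rw [hinner_val, mul_one] at this
    exact this.congr fun r => (hrc_eq r).symm
  -- bounds on r * c r for r > 0
  have hrc_mem : ∀ r : ℝ, 0 < r → 0 ≤ r * c r ∧ r * c r ≤ 1 := by
    intro r hr
    have hterm_nonneg : ∀ i : ℕ, 0 ≤ ν ^ (2 * i) * (r / ((i:ℝ) + r)) := by
      intro i; have := (hfrac01 i r hr).1; positivity
    have hterm_le : ∀ i : ℕ, ν ^ (2 * i) * (r / ((i:ℝ) + r)) ≤ ν ^ (2 * i) := by
      intro i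
      have := hbound_c r hr i
      rwa [Real.norm_eq_abs, abs_of_nonneg (hterm_nonneg i)] at this
    have hsum2 : Summable (fun i : ℕ => ν ^ (2 * i) * (r / ((i:ℝ) + r))) :=
      hsum.of_nonneg_of_le hterm_nonneg hterm_le
    have h0 : 0 ≤ ∑' i : ℕ, ν ^ (2 * i) * (r / ((i:ℝ) + r)) := tsum_nonneg hterm_nonneg
    have h1 : (∑' i : ℕ, ν ^ (2 * i) * (r / ((i:ℝ) + r))) ≤ (1 - ν ^ 2)⁻¹ := by
      rw [← htsum]; exact Summable.tsum_le_tsum hterm_le hsum2 hsum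
    rw [hrc_eq r]
    constructor
    · apply mul_nonneg (by nlinarith) h0
    · calc (1 - ν ^ 2) * ∑' i : ℕ, ν ^ (2 * i) * (r / ((i:ℝ) + r))
          ≤ (1 - ν ^ 2) * (1 - ν ^ 2)⁻¹ := by
            apply mul_le_mul_of_nonneg_left h1 (by nlinarith)
      _ = 1 := mul_inv_cancel₀ hne
  ------------------------------------------------------------------
  -- Part 1 : r^2 * D r → ν^2
  ------------------------------------------------------------------
  have hD_eq : ∀ r : ℝ, r ^ 2 * D r
      = ∑' j : ℕ, (r / ((j:ℝ) + r) - r * c r) ^ 2 * ν ^ (2 * j) := by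
    intro r
    rw [hD r, ← tsum_mul_left]
    exact tsum_congr fun j => by rw [div_eq_mul_inv, div_eq_mul_inv]; ring
  have hg_sum : Summable (fun j : ℕ => ((if j = 0 then (1:ℝ) else 0) - (1 - ν ^ 2)) ^ 2
      * ν ^ (2 * j)) := by
    apply hsum.of_norm_bounded_eventually_nat
    filter_upwards with j
    rw [Real.norm_eq_abs, abs_of_nonneg (by positivity)]
    have h1 : ((if j = 0 then (1:ℝ) else 0) - (1 - ν ^ 2)) ^ 2 ≤ 1 := by
      rw [sq_le_one_iff_abs_le_one, abs_le]
      constructor <;> split_ifs <;> nlinarith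
    nlinarith [pow_nonneg hq0 0, pow_nonneg (le_of_lt hν0) (2*j), sq_nonneg ν]
  have hg_val : (∑' j : ℕ, ((if j = 0 then (1:ℝ) else 0) - (1 - ν ^ 2)) ^ 2 * ν ^ (2 * j))
      = ν ^ 2 := by
    rw [Summable.tsum_eq_zero_add hg_sum]
    have h2 : (∑' j : ℕ, ((if j + 1 = 0 then (1:ℝ) else 0) - (1 - ν ^ 2)) ^ 2 * ν ^ (2 * (j + 1)))
        = ∑' j : ℕ, ((1 - ν ^ 2) ^ 2 * ν ^ 2) * (ν ^ 2) ^ j := by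
      apply tsum_congr
      intro j
      rw [if_neg (Nat.succ_ne_zero j), pow_mul]
      ring
    rw [h2, tsum_mul_left, tsum_geometric_of_lt_one hq0 hq1]
    simp only [if_pos rfl, ↓reduceIte]
    field_simp
    ring
  have hDlim : Tendsto (fun r : ℝ => r ^ 2 * D r) (nhdsWithin 0 (Set.Ioi 0)) (nhds (ν ^ 2)) := by
    rw [← hg_val]
    apply Tendsto.congr (fun r => (hD_eq r).symm)
    apply tendsto_tsum_of_dominated_convergence hsum
    · intro j
      exact (((hrj j).sub hrc).pow 2).mul_const _
    · filter_upwards [self_mem_nhdsWithin] with r hr j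
      rw [Real.norm_eq_abs, abs_of_nonneg (by positivity)]
      have h01 := hfrac01 j r hr
      have hm := hrc_mem r hr
      have h1 : (r / ((j:ℝ) + r) - r * c r) ^ 2 ≤ 1 := by
        rw [sq_le_one_iff_abs_le_one, abs_le]
        constructor <;> linarith
      nlinarith [pow_nonneg (le_of_lt hν0) (2*j)]
  ------------------------------------------------------------------
  -- Part 2 : r^2 * N r → 0
  ------------------------------------------------------------------
  have hr1 : ∀ j : ℕ, Tendsto (fun r : ℝ => r / (((j:ℝ) + r + 1) ^ 2))
      (nhdsWithin 0 (Set.Ioi 0)) (nhds 0) := by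
    intro j
    have h1 : Tendsto (fun r : ℝ => r) (nhdsWithin 0 (Set.Ioi 0)) (nhds 0) :=
      tendsto_id.mono_left nhdsWithin_le_nhds
    have h2 : Tendsto (fun r : ℝ => ((j:ℝ) + r + 1) ^ 2) (nhdsWithin 0 (Set.Ioi 0))
        (nhds (((j:ℝ) + 0 + 1) ^ 2)) := by
      apply Tendsto.mono_left _ nhdsWithin_le_nhds
      exact (((continuous_const.add continuous_id).add continuous_const).pow 2).tendsto 0
    have h3 : (((j:ℝ) + 0 + 1) ^ 2) ≠ 0 := by positivity
    simpa [Pi.div_def] using h1.div h2 h3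
  have hN_eq : ∀ r : ℝ, 0 < r → r ^ 2 * N r
      = ∑' j : ℕ, ((j:ℝ) + 1) * (r / ((j:ℝ) + r)) * (r / (((j:ℝ) + r + 1) ^ 2)) * ν ^ (2 * j) := by
    intro r hr
    rw [hN r, ← tsum_mul_left]
    apply tsum_congr
    intro j
    have hy : (0:ℝ) < (j:ℝ) + r := hjr j r hr
    have hx : (0:ℝ) < (j:ℝ) + r + 1 := by linarith
    field_simp
  have hNlim : Tendsto (fun r : ℝ => r ^ 2 * N r) (nhdsWithin 0 (Set.Ioi 0)) (nhds 0) := by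
    have key : Tendsto (fun r : ℝ => ∑' j : ℕ,
        ((j:ℝ) + 1) * (r / ((j:ℝ) + r)) * (r / (((j:ℝ) + r + 1) ^ 2)) * ν ^ (2 * j))
        (nhdsWithin 0 (Set.Ioi 0)) (nhds (∑' _ : ℕ, (0:ℝ))) := by
      apply tendsto_tsum_of_dominated_convergence hsum
      · intro j
        have hcst : Tendsto (fun _ : ℝ => ((j:ℝ) + 1)) (nhdsWithin 0 (Set.Ioi 0))
            (nhds ((j:ℝ) + 1)) := tendsto_const_nhds
        have := ((hcst.mul (hrj j)).mul (hr1 j)).mul_const (ν ^ (2 * j))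
        simpa using this
      · filter_upwards [self_mem_nhdsWithin] with r hr j
        have hr' : (0:ℝ) < r := hr
        have hy : (0:ℝ) < (j:ℝ) + r := hjr j r hr'
        have hx : (0:ℝ) < (j:ℝ) + r + 1 := by linarith
        have h01 := hfrac01 j r hr'
        have hjn : (0:ℝ) ≤ (j:ℝ) := j.cast_nonneg
        rw [Real.norm_eq_abs, abs_of_nonneg (by positivity)]
        have hA : ((j:ℝ) + 1) * (r / (((j:ℝ) + r + 1) ^ 2)) ≤ 1 := by
          rw [mul_div_assoc', div_le_one (by positivity)]
          nlinarith [sq_nonneg ((j:ℝ) + 1 - r), mul_pos (show (0:ℝ) < (j:ℝ) + 1 by positivity) hr']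
        have hA0 : 0 ≤ ((j:ℝ) + 1) * (r / (((j:ℝ) + r + 1) ^ 2)) := by positivity
        calc ((j:ℝ) + 1) * (r / ((j:ℝ) + r)) * (r / (((j:ℝ) + r + 1) ^ 2)) * ν ^ (2 * j)
            = (((j:ℝ) + 1) * (r / (((j:ℝ) + r + 1) ^ 2))) * (r / ((j:ℝ) + r)) * ν ^ (2 * j) := by
              ring
          _ ≤ 1 * 1 * ν ^ (2 * j) := by
              apply mul_le_mul_of_nonneg_right _ (by positivity)
              apply mul_le_mul hA h01.2 h01.1 zero_le_one
          _ = ν ^ (2 * j) := by ring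
    rw [tsum_zero] at key
    apply key.congr'
    filter_upwards [self_mem_nhdsWithin] with r hr
    exact (hN_eq r hr).symm
  ------------------------------------------------------------------
  -- Part 3 : N/D → 0
  ------------------------------------------------------------------
  refine ⟨hDlim, hNlim, ?_⟩
  have hν2 : (ν:ℝ) ^ 2 ≠ 0 := by positivity
  have hdiv := hNlim.div hDlim hν2
  rw [zero_div] at hdiv
  apply hdiv.congr'
  filter_upwards [self_mem_nhdsWithin] with r hr
  have hr' : (0:ℝ) < r := hr
  have : (r:ℝ) ^ 2 ≠ 0 := by positivity
  exact mul_div_mul_left (N r) (D r) this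
end
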